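/- Let ρ be a density matrix on n qubits (n ≥ 3) and for distinct qubits i,j define s_{ij} = Tr[S_{ij} ρ], where S_{ij} = (I + X_iX_j + Y_iY_j + Z_iZ_j)/2 is the SWAP operator on qubits i and j. Then for any three distinct qubits i, j, k: 0 ≤ s_{ij}+s_{ik}+s_{jk} ≤ 3 and s_{ij}² + s_{ik}² + s_{jk}² + 2(s_{ij}+s_{ik}+s_{jk}) − 2(s_{ij}s_{ik} + s_{ij}s_{jk} + s_{ik}s_{jk}) ≤ 3. -/

import Mathlib

open Matrix ComplexOrder

noncomputable def pauliX : Matrix (Fin 2) (Fin 2) ℂ := !![0, 1; 1, 0]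
noncomputable def pauliY : Matrix (Fin 2) (Fin 2) ℂ := !![0, -Complex.I; Complex.I, 0]
noncomputable def pauliZ : Matrix (Fin 2) (Fin 2) ℂ := !![1, 0; 0, -1]

/-- The single-qubit operator `A` acting on qubit `i` of an `n`-qubit system,
i.e. `I ⊗ ⋯ ⊗ A ⊗ ⋯ ⊗ I`. -/
noncomputable def pauliAt (n : ℕ) (A : Matrix (Fin 2) (Fin 2) ℂ) (i : Fin n) :
    Matrix (Fin n → Fin 2) (Fin n → Fin 2) ℂ :=
  Matrix.of fun f g => A (f i) (g i) * ∏ j ∈ Finset.univ.erase i, (if f j = g j then 1 else 0)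

/-- The SWAP operator on qubits `i` and `j`:
`S_{ij} = (I + X_i X_j + Y_i Y_j + Z_i Z_j)/2`. -/
noncomputable def swapOp (n : ℕ) (i j : Fin n) :
    Matrix (Fin n → Fin 2) (Fin n → Fin 2) ℂ :=
  (1 / 2 : ℂ) • (1 + pauliAt n pauliX i * pauliAt n pauliX j
    + pauliAt n pauliY i * pauliAt n pauliY j
    + pauliAt n pauliZ i * pauliAt n pauliZ j)

/-!
The qubit permutation operators `S_σ` form a unitary representation of the symmetric group, and
`S_{ij} = S_{(i j)}`. On the three qubits `i, j, k` this is a representation of `S₃` whose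
antisymmetrizer `∑ sign σ • S_σ` vanishes: for every basis column two of the three qubits carry the
same value, so some transposition fixes the column while flipping the sign of the antisymmetrizer.
With `A, B, C` the images of `(i j), (i k), (j k)` this gives `B C + C B = A + B + C - 1`, and
together with `C B C = A` every bound becomes `0 ≤ ⟨Xᴴ X⟩` for a suitable `X`:
`X = 1 - A` gives `s ≤ 1`; `A + B + C = 1 + Z + Z⁻¹` for a 3-cycle `Z`, which is three times a
projection, gives `0 ≤ s_{ij} + s_{ik} + s_{jk}`; and the quadratic bound is the discriminant
condition for `t ↦ ⟨Yₜᴴ Yₜ⟩ ≥ 0`, where `Yₜ = (1 - B)(1 - t (1 - C))`.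
-/

open Equiv Equiv.Perm

lemma Equiv.Perm.viaEmbeddingHom_swap {α β : Type*} [DecidableEq α] [DecidableEq β] (e : α ↪ β)
    (a b : α) : viaEmbeddingHom e (swap a b) = swap (e a) (e b) := by
  ext y
  by_cases hy : y ∈ Set.range e
  · obtain ⟨x, rfl⟩ := hy
    rw [viaEmbeddingHom_apply, viaEmbedding_apply, swap_apply_def, swap_apply_def]
    split_ifs <;> simp_all
  · have ha : y ≠ e a := fun h => hy ⟨a, h.symm⟩
    have hb : y ≠ e b := fun h => hy ⟨b, h.symm⟩
    rw [viaEmbeddingHom_apply, viaEmbedding_apply_of_notMem _ _ _ hy,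
      swap_apply_of_ne_of_ne ha hb]

lemma Equiv.Perm.sum_fin_three {M : Type*} [AddCommMonoid M] (f : Perm (Fin 3) → M) :
    ∑ σ, f σ = f 1 + f (swap 0 1) + f (swap 0 2) + f (swap 1 2) + f (finRotate 3)
      + f (finRotate 3)⁻¹ := by
  rw [show (Finset.univ : Finset (Perm (Fin 3))) =
    {1, swap 0 1, swap 0 2, swap 1 2, finRotate 3, (finRotate 3)⁻¹} by decide,
    Finset.sum_insert (by decide), Finset.sum_insert (by decide), Finset.sum_insert (by decide),
    Finset.sum_insert (by decide), Finset.sum_insert (by decide), Finset.sum_singleton]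
  abel

lemma sum_sign_smul_mul {α A : Type*} [DecidableEq α] [Fintype α] [Ring A]
    (π : Perm α →* A) (τ : Perm α) :
    (∑ σ, sign σ • π σ) * π τ = sign τ • ∑ σ, sign σ • π σ := by
  rw [Finset.sum_mul, Finset.smul_sum]
  refine Fintype.sum_equiv (Equiv.mulRight τ) _ _ fun σ => ?_
  rw [coe_mulRight, smul_mul_assoc, ← map_mul, Perm.sign_mul, smul_smul, mul_comm, mul_assoc,
    Int.units_mul_self, mul_one]

section Expectation

variable {m : Type*} [Fintype m] [DecidableEq m]

def expectation (ρ : Matrix m m ℂ) : Matrix m m ℂ →ₗ[ℝ] ℝ where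
  toFun X := ((X * ρ).trace).re
  map_add' X Y := by simp [Matrix.add_mul]
  map_smul' r X := by simp

variable {ρ : Matrix m m ℂ}

lemma expectation_apply (X : Matrix m m ℂ) : expectation ρ X = ((X * ρ).trace).re := rfl

lemma expectation_one (htr : ρ.trace = 1) : expectation ρ 1 = 1 := by
  simp [expectation_apply, htr]

lemma expectation_conjTranspose_mul_self_nonneg (hρ : ρ.PosSemidef) (X : Matrix m m ℂ) :
    0 ≤ expectation ρ (Xᴴ * X) := by
  rw [expectation_apply, Matrix.mul_assoc, trace_mul_comm]
  exact (Complex.le_def.mp (hρ.mul_mul_conjTranspose_same X).trace_nonneg).1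

lemma expectation_le_one_of_involutive (hρ : ρ.PosSemidef) (htr : ρ.trace = 1)
    {X : Matrix m m ℂ} (hX : Xᴴ = X) (hX2 : X * X = 1) : expectation ρ X ≤ 1 := by
  have hsq : (1 - X)ᴴ * (1 - X) = (2 : ℝ) • (1 - X) := by
    rw [conjTranspose_sub, conjTranspose_one, hX]
    simp only [mul_sub, sub_mul, one_mul, mul_one, hX2]
    module
  have h := expectation_conjTranspose_mul_self_nonneg hρ (1 - X)
  rw [hsq, map_smul, map_sub, expectation_one htr, smul_eq_mul] at h
  linarith

lemma expectation_map_swap_le_one {α : Type*} [DecidableEq α] {π : Perm α →* Matrix m m ℂ}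
    (hπ : ∀ σ, (π σ)ᴴ = π σ⁻¹) (hρ : ρ.PosSemidef) (htr : ρ.trace = 1) (x y : α) :
    expectation ρ (π (swap x y)) ≤ 1 :=
  expectation_le_one_of_involutive hρ htr (by rw [hπ, swap_inv])
    (by rw [← map_mul, Equiv.swap_mul_self, map_one])

lemma expectation_one_add_add_inv_nonneg {G : Type*} [Group G] (π : G →* Matrix m m ℂ)
    (hπ : ∀ g, (π g)ᴴ = π g⁻¹) (hρ : ρ.PosSemidef) {c : G} (hc : c ^ 3 = 1) :
    0 ≤ expectation ρ (1 + π c + π c⁻¹) := by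
  have hcc : c * c = c⁻¹ := by rw [eq_inv_iff_mul_eq_one, ← hc, pow_three, mul_assoc]
  have hcc' : c⁻¹ * c⁻¹ = c := by rw [← _root_.mul_inv_rev, hcc, inv_inv]
  have hsq : (1 + π c + π c⁻¹)ᴴ * (1 + π c + π c⁻¹) = (3 : ℝ) • (1 + π c + π c⁻¹) := by
    simp only [conjTranspose_add, conjTranspose_one, hπ, inv_inv, add_mul, mul_add, one_mul,
      mul_one, ← map_mul, hcc, hcc', inv_mul_cancel, mul_inv_cancel, map_one]
    module
  have h := expectation_conjTranspose_mul_self_nonneg hρ (1 + π c + π c⁻¹)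
  rw [hsq, map_smul, smul_eq_mul] at h
  linarith

lemma conjTranspose_mul_self_eq_quadratic {A B C : Matrix m m ℂ} (hB : Bᴴ = B) (hC : Cᴴ = C)
    (hB2 : B * B = 1) (hC2 : C * C = 1) (hCBC : C * B * C = A)
    (hBC : B * C + C * B = A + B + C - 1) (t : ℝ) :
    ((1 - B) * (1 - t • (1 - C)))ᴴ * ((1 - B) * (1 - t • (1 - C)))
      = (2 : ℝ) • ((1 - B) - t • ((1 - B) + (1 - C) - (1 - A)) + (t * t) • (1 - C)) := by
  have hCB : C * B = A + B + C - 1 - B * C := by rw [← hBC]; abel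
  set P := 1 - B
  set Q := 1 - C
  have hPP : P * P = (2 : ℝ) • P := by
    simp only [P, mul_sub, sub_mul, one_mul, mul_one, hB2]
    module
  have hQP : Q * P + P * Q = P + Q - (1 - A) := by
    simp only [P, Q, mul_sub, sub_mul, one_mul, mul_one, hCB]
    abel
  have hQPQ : Q * P * Q = Q := by
    simp only [P, Q, mul_sub, sub_mul, one_mul, mul_one, hC2, hCBC]
    rw [hCB]
    abel
  have hP : Pᴴ = P := by rw [conjTranspose_sub, conjTranspose_one, hB]
  have hQ : Qᴴ = Q := by rw [conjTranspose_sub, conjTranspose_one, hC]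
  rw [conjTranspose_mul, conjTranspose_sub, conjTranspose_smul, conjTranspose_one, hP, hQ,
    star_trivial]
  calc (1 - t • Q) * P * (P * (1 - t • Q)) = (1 - t • Q) * (P * P) * (1 - t • Q) := by
        simp only [Matrix.mul_assoc]
    _ = (2 : ℝ) • (P - t • (Q * P + P * Q) + (t * t) • (Q * P * Q)) := by
        rw [hPP]
        simp only [mul_sub, sub_mul, one_mul, mul_one, smul_mul_assoc, mul_smul_comm,
          Matrix.mul_assoc]
        module
    _ = _ := by rw [hQP, hQPQ]

lemma sq_one_add_expectation_sub_sub_le (hρ : ρ.PosSemidef) (htr : ρ.trace = 1)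
    {A B C : Matrix m m ℂ} (hB : Bᴴ = B) (hC : Cᴴ = C) (hB2 : B * B = 1) (hC2 : C * C = 1)
    (hCBC : C * B * C = A) (hBC : B * C + C * B = A + B + C - 1) :
    (1 + expectation ρ A - expectation ρ B - expectation ρ C) ^ 2
      ≤ 4 * (1 - expectation ρ B) * (1 - expectation ρ C) := by
  have hquad : ∀ t : ℝ, 0 ≤ (1 - expectation ρ C) * (t * t)
      + -(1 + expectation ρ A - expectation ρ B - expectation ρ C) * t
      + (1 - expectation ρ B) := by
    intro t
    have h := expectation_conjTranspose_mul_self_nonneg hρ ((1 - B) * (1 - t • (1 - C)))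
    rw [conjTranspose_mul_self_eq_quadratic hB hC hB2 hC2 hCBC hBC t] at h
    simp only [map_smul, map_add, map_sub, expectation_one htr, smul_eq_mul] at h
    nlinarith
  have h := discrim_le_zero hquad
  rw [discrim] at h
  linarith

end Expectation

section ThreeSites

variable {m : Type*} [Fintype m] [DecidableEq m] {π : Perm (Fin 3) →* Matrix m m ℂ}
  {ρ : Matrix m m ℂ}

lemma map_finRotate_add_map_inv (hE : ∑ σ, sign σ • π σ = 0) :
    π (finRotate 3) + π (finRotate 3)⁻¹ = π (swap 0 1) + π (swap 0 2) + π (swap 1 2) - 1 := by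
  rw [sum_fin_three] at hE
  simp only [show sign (swap (0 : Fin 3) 1) = -1 by decide,
    show sign (swap (0 : Fin 3) 2) = -1 by decide, show sign (swap (1 : Fin 3) 2) = -1 by decide,
    show sign (finRotate 3) = 1 by decide, sign_inv, map_one, one_smul, Units.neg_smul] at hE
  rw [← sub_eq_zero, ← hE]
  abel

lemma expectation_map_swaps_nonneg (hπ : ∀ σ, (π σ)ᴴ = π σ⁻¹)
    (hE : ∑ σ, sign σ • π σ = 0) (hρ : ρ.PosSemidef) :
    0 ≤ expectation ρ (π (swap 0 1)) + expectation ρ (π (swap 0 2))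
      + expectation ρ (π (swap 1 2)) := by
  have h := expectation_one_add_add_inv_nonneg π hπ hρ (c := finRotate 3) (by decide)
  rwa [add_assoc 1, map_finRotate_add_map_inv hE, add_sub_cancel, map_add, map_add] at h

lemma sq_one_add_expectation_map_swap_sub_sub_le (hπ : ∀ σ, (π σ)ᴴ = π σ⁻¹)
    (hE : ∑ σ, sign σ • π σ = 0) (hρ : ρ.PosSemidef) (htr : ρ.trace = 1) :
    (1 + expectation ρ (π (swap 0 1)) - expectation ρ (π (swap 0 2))
      - expectation ρ (π (swap 1 2))) ^ 2
      ≤ 4 * (1 - expectation ρ (π (swap 0 2))) * (1 - expectation ρ (π (swap 1 2))) := by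
  refine sq_one_add_expectation_sub_sub_le hρ htr (by rw [hπ, swap_inv]) (by rw [hπ, swap_inv])
    (by rw [← map_mul, Equiv.swap_mul_self, map_one])
    (by rw [← map_mul, Equiv.swap_mul_self, map_one]) ?_ ?_
  · rw [← map_mul, ← map_mul]
    congr 1
    decide
  · rw [← map_mul, ← map_mul, ← map_finRotate_add_map_inv hE,
      show swap (0 : Fin 3) 2 * swap 1 2 = (finRotate 3)⁻¹ by decide,
      show swap (1 : Fin 3) 2 * swap 0 2 = finRotate 3 by decide, add_comm]

end ThreeSites

section SitePermutation

variable {R ι d : Type*} [Fintype ι] [DecidableEq ι] [Fintype d] [DecidableEq d]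

variable (d) in
def sitePerm : Perm ι →* Perm (ι → d) where
  toFun σ := σ.arrowCongr (Equiv.refl d)
  map_one' := rfl
  map_mul' _ _ := rfl

variable (R d) in
def sitePermOp [NonAssocSemiring R] : Perm ι →* Matrix (ι → d) (ι → d) R :=
  permMatrixHom.comp (sitePerm d)

lemma sitePermOp_apply [CommSemiring R] (σ : Perm ι) (f g : ι → d) :
    sitePermOp R d σ f g = ∏ l, (1 : Matrix d d R) (f (σ l)) (g l) := by
  simp [sitePermOp, sitePerm, PEquiv.toMatrix_apply, Equiv.arrowCongr, Matrix.one_apply,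
    Finset.prod_boole, funext_iff]

lemma sitePermOp_swap_apply [CommSemiring R] {i j : ι} (hij : i ≠ j) (f g : ι → d) :
    sitePermOp R d (swap i j) f g = (1 : Matrix d d R) (f j) (g i) * (1 : Matrix d d R) (f i) (g j)
      * ∏ l ∈ {i, j}ᶜ, (1 : Matrix d d R) (f l) (g l) := by
  rw [sitePermOp_apply, ← Finset.prod_mul_prod_compl {i, j}, Finset.prod_pair hij,
    swap_apply_left, swap_apply_right]
  congr 1
  refine Finset.prod_congr rfl fun l hl => ?_
  rw [Finset.mem_compl, Finset.mem_insert, Finset.mem_singleton, not_or] at hl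
  rw [swap_apply_of_ne_of_ne hl.1 hl.2]

lemma conjTranspose_sitePermOp [NonAssocSemiring R] [StarRing R] (σ : Perm ι) :
    (sitePermOp R d σ)ᴴ = sitePermOp R d σ⁻¹ := by
  simp [sitePermOp]

lemma mul_sitePermOp_apply [NonAssocSemiring R] (X : Matrix (ι → d) (ι → d) R) (σ : Perm ι)
    (f g : ι → d) : (X * sitePermOp R d σ) f g = X f (g ∘ ⇑σ⁻¹) := by
  simp [sitePermOp, sitePerm, PEquiv.mul_toMatrix_toPEquiv, Equiv.arrowCongr]
  rfl

theorem sum_sign_smul_sitePermOp_eq_zero [Ring R] [IsAddTorsionFree R] {α : Type*} [Fintype α]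
    [DecidableEq α] (e : α ↪ ι) (h : Fintype.card d < Fintype.card α) :
    ∑ σ : Perm α, sign σ • sitePermOp R d (viaEmbeddingHom e σ) = 0 := by
  ext f g
  obtain ⟨a, b, hab, hg⟩ := Fintype.exists_ne_map_eq_of_card_lt (g ∘ e) h
  have hfix : g ∘ ⇑(swap (e a) (e b))⁻¹ = g := by
    have hg' : g (e a) = g (e b) := hg
    rw [swap_inv, comp_swap_eq_update, hg', Function.update_eq_self, ← hg',
      Function.update_eq_self]
  have key := congr_fun₂ (sum_sign_smul_mul ((sitePermOp R d).comp (viaEmbeddingHom e))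
    (swap a b)) f g
  simp only [MonoidHom.comp_apply, viaEmbeddingHom_swap, mul_sitePermOp_apply, hfix,
    sign_swap hab, Units.neg_smul, one_smul, Matrix.neg_apply] at key
  exact self_eq_neg.mp key

end SitePermutation

section KroneckerPi

variable {R ι d : Type*} [CommSemiring R] [Fintype ι]

def kroneckerPi (M : ι → Matrix d d R) : Matrix (ι → d) (ι → d) R :=
  of fun f g => ∏ l, M l (f l) (g l)

lemma kroneckerPi_mul [DecidableEq ι] [Fintype d] (M N : ι → Matrix d d R) :
    kroneckerPi M * kroneckerPi N = kroneckerPi (M * N) := by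
  ext f g
  simp only [kroneckerPi, Matrix.mul_apply, of_apply, Pi.mul_apply, ← Finset.prod_mul_distrib]
  exact (Fintype.prod_sum fun l b => M l (f l) b * N l b (g l)).symm

lemma kroneckerPi_one [DecidableEq d] : kroneckerPi (1 : ι → Matrix d d R) = 1 := by
  ext f g
  simp [kroneckerPi, Matrix.one_apply, Finset.prod_boole, funext_iff]

lemma kroneckerPi_apply_of_eq_one [DecidableEq ι] [DecidableEq d] {M : ι → Matrix d d R}
    {i j : ι} (hij : i ≠ j) (hM : ∀ l, l ≠ i → l ≠ j → M l = 1) (f g : ι → d) :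
    kroneckerPi M f g
      = M i (f i) (g i) * M j (f j) (g j) * ∏ l ∈ {i, j}ᶜ, (1 : Matrix d d R) (f l) (g l) := by
  rw [kroneckerPi, of_apply, ← Finset.prod_mul_prod_compl {i, j}, Finset.prod_pair hij]
  congr 1
  refine Finset.prod_congr rfl fun l hl => ?_
  rw [Finset.mem_compl, Finset.mem_insert, Finset.mem_singleton, not_or] at hl
  rw [hM l hl.1 hl.2]

end KroneckerPi

lemma pauliAt_eq_kroneckerPi (n : ℕ) (A : Matrix (Fin 2) (Fin 2) ℂ) (i : Fin n) :
    pauliAt n A i = kroneckerPi (Pi.mulSingle i A) := by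
  ext f g
  rw [pauliAt, kroneckerPi, of_apply, of_apply, Fintype.prod_eq_mul_prod_compl i,
    Finset.compl_singleton, Pi.mulSingle_eq_same]
  congr 1
  refine Finset.prod_congr rfl fun l hl => ?_
  rw [Pi.mulSingle_eq_of_ne (Finset.ne_of_mem_erase hl), Matrix.one_apply]

lemma pauli_swap_identity_apply (a b c e : Fin 2) :
    (1 / 2 : ℂ) * ((1 : Matrix (Fin 2) (Fin 2) ℂ) a b * (1 : Matrix (Fin 2) (Fin 2) ℂ) c e
      + pauliX a b * pauliX c e + pauliY a b * pauliY c e + pauliZ a b * pauliZ c e)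
      = (1 : Matrix (Fin 2) (Fin 2) ℂ) c b * (1 : Matrix (Fin 2) (Fin 2) ℂ) a e := by
  fin_cases a <;> fin_cases b <;> fin_cases c <;> fin_cases e <;>
    norm_num [pauliX, pauliY, pauliZ, Matrix.one_apply]

theorem swapOp_eq_sitePermOp {n : ℕ} {i j : Fin n} (hij : i ≠ j) :
    swapOp n i j = sitePermOp ℂ (Fin 2) (swap i j) := by
  have hM : ∀ A B : Matrix (Fin 2) (Fin 2) ℂ, ∀ l, l ≠ i → l ≠ j →
      (Pi.mulSingle i A * Pi.mulSingle j B : Fin n → Matrix (Fin 2) (Fin 2) ℂ) l = 1 :=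
    fun A B l hi hj => by
      rw [Pi.mul_apply, Pi.mulSingle_eq_of_ne hi, Pi.mulSingle_eq_of_ne hj, mul_one]
  ext f g
  rw [swapOp, ← kroneckerPi_one]
  simp only [pauliAt_eq_kroneckerPi, kroneckerPi_mul, Matrix.smul_apply, Matrix.add_apply,
    smul_eq_mul]
  rw [kroneckerPi_apply_of_eq_one (M := 1) hij fun _ _ _ => rfl,
    kroneckerPi_apply_of_eq_one hij (hM _ _), kroneckerPi_apply_of_eq_one hij (hM _ _),
    kroneckerPi_apply_of_eq_one hij (hM _ _), sitePermOp_swap_apply hij]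
  simp only [Pi.mul_apply, Pi.one_apply, Pi.mulSingle_eq_same, Pi.mulSingle_eq_of_ne hij,
    Pi.mulSingle_eq_of_ne hij.symm, mul_one, one_mul]
  linear_combination (∏ l ∈ {i, j}ᶜ, (1 : Matrix (Fin 2) (Fin 2) ℂ) (f l) (g l))
    * pauli_swap_identity_apply (f i) (g i) (f j) (g j)

theorem swap_triangle_inequalities (n : ℕ)
    (ρ : Matrix (Fin n → Fin 2) (Fin n → Fin 2) ℂ)
    (hρ : ρ.PosSemidef) (htr : ρ.trace = 1)
    (i j k : Fin n) (hij : i ≠ j) (hik : i ≠ k) (hjk : j ≠ k) :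
    (0 ≤ ((swapOp n i j * ρ).trace).re + ((swapOp n i k * ρ).trace).re
        + ((swapOp n j k * ρ).trace).re) ∧
    (((swapOp n i j * ρ).trace).re + ((swapOp n i k * ρ).trace).re
        + ((swapOp n j k * ρ).trace).re ≤ 3) ∧
    (((swapOp n i j * ρ).trace).re ^ 2 + ((swapOp n i k * ρ).trace).re ^ 2
        + ((swapOp n j k * ρ).trace).re ^ 2
      + 2 * (((swapOp n i j * ρ).trace).re + ((swapOp n i k * ρ).trace).re
        + ((swapOp n j k * ρ).trace).re)
      - 2 * (((swapOp n i j * ρ).trace).re * ((swapOp n i k * ρ).trace).re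
        + ((swapOp n i j * ρ).trace).re * ((swapOp n j k * ρ).trace).re
        + ((swapOp n i k * ρ).trace).re * ((swapOp n j k * ρ).trace).re) ≤ 3) := by
  let e : Fin 3 ↪ Fin n := ⟨![i, j, k], by
    intro a b hab
    fin_cases a <;> fin_cases b <;> simp_all [Ne.symm hij, Ne.symm hik, Ne.symm hjk]⟩
  let π := (sitePermOp ℂ (Fin 2)).comp (viaEmbeddingHom e)
  have hπ : ∀ σ, (π σ)ᴴ = π σ⁻¹ := fun σ => by simp [π, conjTranspose_sitePermOp]
  have hE : ∑ σ, sign σ • π σ = 0 := sum_sign_smul_sitePermOp_eq_zero e (by simp)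
  have hswap : ∀ a b : Fin 3, a ≠ b → swapOp n (e a) (e b) = π (swap a b) := fun a b hab => by
    rw [swapOp_eq_sitePermOp (e.injective.ne hab), MonoidHom.comp_apply, viaEmbeddingHom_swap]
  rw [show swapOp n i j = π (swap 0 1) from hswap 0 1 (by decide),
    show swapOp n i k = π (swap 0 2) from hswap 0 2 (by decide),
    show swapOp n j k = π (swap 1 2) from hswap 1 2 (by decide)]
  have hle := expectation_map_swap_le_one hπ hρ htr
  have hsq := sq_one_add_expectation_map_swap_sub_sub_le hπ hE hρ htr
  simp only [expectation_apply] at hle hsq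
  exact ⟨expectation_map_swaps_nonneg hπ hE hρ, by linarith [hle 0 1, hle 0 2, hle 1 2],
    by linear_combination hsq⟩
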